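/- For every positive integer p, all natural numbers n and k with 0 ≤ k ≤ n, and every real number x, the Nörlund polynomials satisfy Σ_{j=0}^{n-k} C(n-k, j) B_{j+k}^{(p)}(x) = Σ_{j=0}^{k} C(k, j) (-1)^j { B_{n-j}^{(p)}(x) + (n-j) B_{n-j-1}^{(p-1)}(x) }. -/

import Mathlib

/-!
Writing `F_p(t) = Σ B_m^{(p)}(x) t^m / m!`, the generating function gives
`F_p(t) (e^t - 1) = t F_{p-1}(t)`, i.e. `F_p e^t = F_p + t F_{p-1}`; comparing coefficients,
`Σ_i C(m, i) B_i^{(p)}(x) = B_m^{(p)}(x) + m B_{m-1}^{(p-1)}(x)`.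
The theorem is then an identity valid for any sequence `b`: under the linear evaluation
`Xⁱ ↦ b i` of polynomials, the left side is the image of `X^k (X + 1)^(n-k)` and the right side
that of the same polynomial after expanding `X^k = ((X + 1) - 1)^k` binomially.
-/

open Finset Nat

namespace PowerSeries

variable {A : Type*} [Field A]

def egf (b : ℕ → A) : A⟦X⟧ := mk fun m => b m / m !

theorem coeff_egf (b : ℕ → A) (m : ℕ) : coeff m (egf b) = b m / m ! := coeff_mk _ _

theorem egf_add (b c : ℕ → A) : egf (b + c) = egf b + egf c := by
  ext m
  simp only [map_add, coeff_egf, Pi.add_apply, add_div]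

variable [CharZero A]

theorem egf_injective : Function.Injective (egf : (ℕ → A) → A⟦X⟧) := by
  intro b c h
  funext m
  have := congrArg (coeff m) h
  rwa [coeff_egf, coeff_egf, div_left_inj' (cast_ne_zero.mpr m.factorial_ne_zero)] at this

theorem egf_mul_exp (b : ℕ → A) :
    egf b * exp A = egf fun m => ∑ i ∈ range (m + 1), (m.choose i : A) * b i := by
  ext m
  rw [coeff_mul, Nat.sum_antidiagonal_eq_sum_range_succ_mk, coeff_egf, sum_div]
  refine sum_congr rfl fun i hi => ?_
  have him : i ≤ m := Nat.lt_succ_iff.mp (mem_range.mp hi)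
  have hfac : ((m.choose i * i ! * (m - i)! : ℕ) : A) = m ! := by
    rw [Nat.choose_mul_factorial_mul_factorial him]
  have : (m.choose i : A) ≠ 0 := cast_ne_zero.mpr (choose_pos him).ne'
  dsimp only
  rw [coeff_egf, coeff_exp, map_div₀, map_one, map_natCast, ← hfac, cast_mul, cast_mul]
  field_simp

theorem X_mul_egf (b : ℕ → A) : X * egf b = egf fun m => m * b (m - 1) := by
  ext m
  rcases m with _ | m
  · simp [coeff_egf]
  · rw [coeff_succ_X_mul, coeff_egf, coeff_egf, Nat.factorial_succ]
    have : (m ! : A) ≠ 0 := cast_ne_zero.mpr m.factorial_ne_zero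
    push_cast
    field_simp

theorem exp_sub_one_pow_ne_zero (r : ℕ) : (exp A - 1) ^ r ≠ 0 := by
  refine pow_ne_zero r fun h => ?_
  simpa [coeff_exp] using congrArg (coeff 1) h

end PowerSeries

namespace Polynomial

variable {R : Type*} [CommRing R]

def umbralEval (b : ℕ → R) : R[X] →ₗ[R] R := lsum fun i => LinearMap.toSpanSingleton R R (b i)

theorem umbralEval_monomial (b : ℕ → R) (i : ℕ) (c : R) :
    umbralEval b (monomial i c) = c * b i := by
  simp [umbralEval, sum_monomial_index]

theorem umbralEval_X_pow_mul_X_add_one_pow (b : ℕ → R) (k m : ℕ) :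
    umbralEval b (X ^ k * (X + 1) ^ m) = ∑ j ∈ range (m + 1), (m.choose j : R) * b (j + k) := by
  rw [add_pow, mul_sum, map_sum]
  refine sum_congr rfl fun j _ => ?_
  rw [one_pow, mul_one, ← C_eq_natCast, ← mul_assoc, ← pow_add, mul_comm,
    C_mul_X_pow_eq_monomial, umbralEval_monomial, add_comm k]

end Polynomial

theorem sub_one_pow_mul_pow {R : Type*} [CommRing R] (y : R) {k n : ℕ} (hkn : k ≤ n) :
    (y - 1) ^ k * y ^ (n - k) =
      ∑ j ∈ range (k + 1), (k.choose j : R) * (-1) ^ j * y ^ (n - j) := by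
  rw [sub_eq_neg_add, add_pow, sum_mul]
  refine sum_congr rfl fun j hj => ?_
  have hjk : j ≤ k := Nat.lt_succ_iff.mp (mem_range.mp hj)
  rw [← Nat.sub_add_sub_cancel hkn hjk, pow_add]
  ring

open Polynomial in
theorem sum_choose_mul_shift_eq_sum_alternating {R : Type*} [CommRing R] (b : ℕ → R) {k n : ℕ}
    (hkn : k ≤ n) :
    ∑ j ∈ range (n - k + 1), ((n - k).choose j : R) * b (j + k) =
      ∑ j ∈ range (k + 1), (k.choose j : R) * (-1) ^ j *
        ∑ i ∈ range (n - j + 1), ((n - j).choose i : R) * b i := by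
  have expand := sub_one_pow_mul_pow (X + 1 : R[X]) hkn
  rw [add_sub_cancel_right] at expand
  rw [← umbralEval_X_pow_mul_X_add_one_pow, expand, map_sum]
  refine sum_congr rfl fun j _ => ?_
  have binomial : umbralEval b ((X + 1) ^ (n - j)) =
      ∑ i ∈ range (n - j + 1), ((n - j).choose i : R) * b i := by
    simpa using umbralEval_X_pow_mul_X_add_one_pow b 0 (n - j)
  have scalar : ((k.choose j : R[X]) * (-1) ^ j) = C ((k.choose j : R) * (-1) ^ j) := by simp
  rw [scalar, C_mul', map_smul, binomial, smul_eq_mul]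

open PowerSeries in
theorem norlund_sum_choose (B : ℕ → ℝ → ℕ → ℝ)
    (hB : ∀ (q : ℕ) (y : ℝ), (PowerSeries.mk fun m => B q y m / (m.factorial : ℝ)) *
        (PowerSeries.exp ℝ - 1) ^ q =
      PowerSeries.X ^ q * PowerSeries.rescale y (PowerSeries.exp ℝ))
    (q : ℕ) (x : ℝ) (m : ℕ) :
    ∑ i ∈ range (m + 1), (m.choose i : ℝ) * B (q + 1) x i =
      B (q + 1) x m + m * B q x (m - 1) := by
  have shift : egf (B (q + 1) x) * exp ℝ = egf (B (q + 1) x) + X * egf (B q x) := by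
    refine mul_right_cancel₀ (exp_sub_one_pow_ne_zero q) ?_
    have egf_hB : ∀ r, egf (B r x) * (exp ℝ - 1) ^ r = X ^ r * rescale x (exp ℝ) := (hB · x)
    linear_combination egf_hB (q + 1) - X * egf_hB q
  rw [egf_mul_exp, X_mul_egf, ← egf_add] at shift
  exact congrFun (egf_injective shift) m

/-- Kim's identity for the Nörlund polynomials `B_n^{(p)}(x)` (generating function
`e^{x t} (t/(e^t-1))^p = Σ B_n^{(p)}(x) tⁿ/n!`, with `B_n^{(0)}(x) = xⁿ`):
`Σ_{j=0}^{n-k} C(n-k,j) B_{j+k}^{(p)}(x)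
  = Σ_{j=0}^{k} C(k,j) (-1)^j {B_{n-j}^{(p)}(x) + (n-j) B_{n-j-1}^{(p-1)}(x)}`. -/
theorem statement_15 (p : ℕ) (hp : 0 < p) (n k : ℕ) (hkn : k ≤ n) (x : ℝ)
    (B : ℕ → ℝ → ℕ → ℝ)
    (hB : ∀ (q : ℕ) (y : ℝ), (PowerSeries.mk fun m => B q y m / (m.factorial : ℝ)) *
        (PowerSeries.exp ℝ - 1) ^ q =
      PowerSeries.X ^ q * PowerSeries.rescale y (PowerSeries.exp ℝ)) :
    ∑ j ∈ Finset.range (n - k + 1), ((n - k).choose j : ℝ) * B p x (j + k) =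
      ∑ j ∈ Finset.range (k + 1), (k.choose j : ℝ) * (-1) ^ j *
        (B p x (n - j) + ((n : ℝ) - (j : ℝ)) * B (p - 1) x (n - j - 1)) := by
  obtain ⟨q, rfl⟩ : ∃ q, p = q + 1 := ⟨p - 1, by omega⟩
  rw [sum_choose_mul_shift_eq_sum_alternating _ hkn, Nat.add_sub_cancel]
  refine sum_congr rfl fun j hj => ?_
  have hjn : j ≤ n := (Nat.lt_succ_iff.mp (mem_range.mp hj)).trans hkn
  rw [norlund_sum_choose B hB, Nat.cast_sub hjn]
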